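/- arXiv:1506.04538 — 4 statements merged into one kernel-verified Lean document; each statement's English description precedes it below -/
import Mathlib

section
/- Suppose B is Lorentzian of signature (1, n−1) on V and F is a nonzero p-form on V which is of type N with multiple null direction ℓ ≠ 0 and also of type N with multiple null direction ℓ′ ≠ 0. Then ℓ′ is a scalar multiple of ℓ. (The multiple null direction of a nonzero type N p-form is unique up to scale; this is used in the proof of Lemma B.3.) -/
open scoped BigOperators

/-- `ι_ℓ F = 0`: the interior product of the alternating form `F` with the vector `ℓ`
vanishes.  Since `F` is alternating, this is equivalent to saying that `F` vanishes
whenever one of its arguments equals `ℓ`. -/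
def IotaZero {V : Type*} [AddCommGroup V] [Module ℝ V] {p : ℕ}
    (F : AlternatingMap ℝ V ℝ (Fin p)) (ℓ : V) : Prop :=
  ∀ v : Fin p → V, (∃ i, v i = ℓ) → F v = 0

/-- `ℓ♭ ∧ F = 0` with respect to the bilinear form `B`. -/
def WedgeFlatZero {V : Type*} [AddCommGroup V] [Module ℝ V] {p : ℕ}
    (B : V →ₗ[ℝ] V →ₗ[ℝ] ℝ) (F : AlternatingMap ℝ V ℝ (Fin p)) (ℓ : V) : Prop :=
  ∀ v : Fin (p + 1) → V,
    ∑ i : Fin (p + 1), (-1 : ℝ) ^ (i : ℕ) * B ℓ (v i) * F (v ∘ i.succAbove) = 0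

/-- `F` is of type N with multiple null direction `ℓ` (Definition 1.1). -/
def TypeN {V : Type*} [AddCommGroup V] [Module ℝ V] {p : ℕ}
    (B : V →ₗ[ℝ] V →ₗ[ℝ] ℝ) (F : AlternatingMap ℝ V ℝ (Fin p)) (ℓ : V) : Prop :=
  IotaZero F ℓ ∧ WedgeFlatZero B F ℓ

/-- The signs `ε₀ = −1`, `ε_a = 1` for `a ≥ 1`. -/
def epsSign {n : ℕ} (a : Fin n) : ℝ := if (a : ℕ) = 0 then -1 else 1

/-- `e` is a pseudo-orthonormal basis for `B` of Lorentzian signature `(1, n−1)`: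
`B(e_a, e_b) = ε_a δ_{ab}` with `ε₀ = −1` and `ε_a = +1` otherwise. -/
def IsLorentzBasis {V : Type*} [AddCommGroup V] [Module ℝ V] {n : ℕ}
    (B : V →ₗ[ℝ] V →ₗ[ℝ] ℝ) (e : Module.Basis (Fin n) ℝ V) : Prop :=
  ∀ a b : Fin n, B (e a) (e b) = if a = b then epsSign a else 0

/-!
Evaluating `ℓ♭ ∧ F` on `(ℓ', w)` with `F w ≠ 0` shows `B(ℓ, ℓ') = 0`, so `ℓ` and `ℓ'` are
mutually orthogonal null vectors; in Lorentzian signature these are necessarily parallel.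
-/

section

variable {V : Type*} [AddCommGroup V] [Module ℝ V] {B : V →ₗ[ℝ] V →ₗ[ℝ] ℝ}

/-- Evaluate `ℓ♭ ∧ F` on `(u', w₁, …, w_p)`: every term but the first contains `u'`. -/
theorem WedgeFlatZero.apply_eq_zero_of_iotaZero {p : ℕ} {F : AlternatingMap ℝ V ℝ (Fin p)}
    {u u' : V} (hw : WedgeFlatZero B F u) (hi : IotaZero F u') (hF : F ≠ 0) : B u u' = 0 := by
  obtain ⟨w, hFw⟩ : ∃ w, F w ≠ 0 := by
    by_contra! h
    exact hF (AlternatingMap.ext h)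
  have hsum := hw (Fin.cons u' w)
  have htail (i : Fin p) : F (Fin.cons u' w ∘ i.succ.succAbove) = 0 := by
    have : NeZero p := .of_pos i.pos
    exact hi _ ⟨0, by simp⟩
  have hhead : (Fin.cons u' w : Fin (p + 1) → V) ∘ (0 : Fin (p + 1)).succAbove = w := by
    funext j
    simp [Fin.succAbove_zero]
  simp only [Fin.sum_univ_succ, htail, mul_zero, Finset.sum_const_zero, add_zero, hhead,
    Fin.val_zero, pow_zero, one_mul, Fin.cons_zero] at hsum
  exact (mul_eq_zero.mp hsum).resolve_right hFw

namespace IsLorentzBasis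

theorem apply_eq_sum {n : ℕ} {e : Module.Basis (Fin n) ℝ V} (he : IsLorentzBasis B e)
    (u v : V) : B u v = ∑ a, epsSign a * e.repr u a * e.repr v a := by
  have hB : ∀ a b, B (e a) (e b) = if a = b then epsSign a else 0 := he
  conv_lhs => rw [← e.sum_repr u, ← e.sum_repr v]
  simp only [map_sum, map_smul, LinearMap.sum_apply, LinearMap.smul_apply, smul_eq_mul, hB,
    mul_ite, mul_zero, Finset.sum_ite_eq', Finset.mem_univ, if_true]
  exact Finset.sum_congr rfl fun a _ => by ring

theorem eq_zero_of_apply_self_eq_zero {m : ℕ} {e : Module.Basis (Fin (m + 1)) ℝ V}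
    (he : IsLorentzBasis B e) {z : V} (hz : B z z = 0) (h0 : e.repr z 0 = 0) : z = 0 := by
  have hsq : ∑ a, e.repr z a ^ 2 = 0 := by
    rw [← hz, he.apply_eq_sum]
    refine Finset.sum_congr rfl fun a _ => ?_
    by_cases ha : a = 0
    · simp [ha, h0]
    · have ha' : (a : ℕ) ≠ 0 := fun h => ha (Fin.ext h)
      simp [epsSign, ha', sq]
  have hcoord := (Finset.sum_eq_zero_iff_of_nonneg fun a _ => sq_nonneg (e.repr z a)).mp hsq
  exact (e.ext_elem_iff).mpr fun a => by simpa using hcoord a (Finset.mem_univ a)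

/-- `z = y₀ x − x₀ y` is null with vanishing time coordinate, hence zero; and `x₀ ≠ 0`
because `x` is a nonzero null vector. -/
theorem exists_eq_smul_of_null {n : ℕ} {e : Module.Basis (Fin n) ℝ V}
    (he : IsLorentzBasis B e) {x y : V} (hx : x ≠ 0) (hxx : B x x = 0) (hyy : B y y = 0)
    (hxy : B x y = 0) (hyx : B y x = 0) : ∃ c : ℝ, y = c • x := by
  cases n with
  | zero => exact absurd ((e.ext_elem_iff).mpr fun a => a.elim0) hx
  | succ m =>
    set x₀ := e.repr x 0
    set y₀ := e.repr y 0
    have hx₀ : x₀ ≠ 0 := fun h => hx (he.eq_zero_of_apply_self_eq_zero hxx h)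
    have hz : y₀ • x - x₀ • y = 0 := by
      refine he.eq_zero_of_apply_self_eq_zero ?_ ?_
      · simp [hxx, hyy, hxy, hyx]
      · simp [x₀, y₀, mul_comm]
    refine ⟨y₀ / x₀, ?_⟩
    rw [sub_eq_zero] at hz
    rw [div_eq_inv_mul, mul_smul, hz, smul_smul, inv_mul_cancel₀ hx₀, one_smul]

end IsLorentzBasis

end

theorem typeN_direction_unique_general {V : Type*} [AddCommGroup V] [Module ℝ V]
    {n : ℕ}
    (B : V →ₗ[ℝ] V →ₗ[ℝ] ℝ)
    (hLor : ∃ e : Module.Basis (Fin n) ℝ V, IsLorentzBasis B e)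
    {p : ℕ} (F : AlternatingMap ℝ V ℝ (Fin p)) (hF : F ≠ 0)
    {ℓ ℓ' : V} (hℓ : ℓ ≠ 0)
    (h1 : TypeN B F ℓ) (h2 : TypeN B F ℓ') :
    ∃ c : ℝ, ℓ' = c • ℓ := by
  obtain ⟨e, he⟩ := hLor
  have orth : ∀ {u u'}, TypeN B F u → TypeN B F u' → B u u' = 0 := fun hu hu' =>
    hu.2.apply_eq_zero_of_iotaZero hu'.1 hF
  exact he.exists_eq_smul_of_null hℓ (orth h1 h1) (orth h2 h2) (orth h1 h2) (orth h2 h1)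

/-- the multiple null direction of a nonzero type N `p`-form on a
Lorentzian space of signature `(1, n−1)` is unique up to scale. -/
theorem typeN_direction_unique {V : Type*} [AddCommGroup V] [Module ℝ V]
    [FiniteDimensional ℝ V] {n : ℕ}
    (B : V →ₗ[ℝ] V →ₗ[ℝ] ℝ)
    (hLor : ∃ e : Module.Basis (Fin n) ℝ V, IsLorentzBasis B e)
    {p : ℕ} (F : AlternatingMap ℝ V ℝ (Fin p)) (hF : F ≠ 0)
    {ℓ ℓ' : V} (hℓ : ℓ ≠ 0) (hℓ' : ℓ' ≠ 0)
    (h1 : TypeN B F ℓ) (h2 : TypeN B F ℓ') :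
    ∃ c : ℝ, ℓ' = c • ℓ :=
  typeN_direction_unique_general B hLor F hF hℓ h1 h2
end

section
/- Let B be nondegenerate and let F be a p-form on V (p ≥ 1) of type N with multiple null direction ℓ ≠ 0. Then the 2p-form F ∧ F vanishes identically. Consequently every k-fold wedge power F ∧ ⋯ ∧ F with k ≥ 2 factors vanishes, so the Chern–Simons term α F ∧ ⋯ ∧ F (k ≥ 2) of the Maxwell–Chern–Simons equations vanishes identically for type N fields (Section 2.3.1). -/
open scoped BigOperators

/-- The wedge product of a `p`-form and a `q`-form (the standard shuffle/exterior
product, realised via `AlternatingMap.domCoprod`). -/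
noncomputable def wedge {V : Type*} [AddCommGroup V] [Module ℝ V] {p q : ℕ}
    (F : AlternatingMap ℝ V ℝ (Fin p)) (G : AlternatingMap ℝ V ℝ (Fin q)) :
    AlternatingMap ℝ V ℝ (Fin (p + q)) :=
  (TensorProduct.lid ℝ ℝ).toLinearMap.compAlternatingMap
    ((F.domCoprod G).domDomCongr finSumFinEquiv)

/-- The `k`-fold wedge power `F ∧ ⋯ ∧ F` of a `p`-form `F` (a `k·p`-form; the empty
product is the constant `0`-form `1`). -/
noncomputable def wedgePow {V : Type*} [AddCommGroup V] [Module ℝ V] {p : ℕ}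
    (F : AlternatingMap ℝ V ℝ (Fin p)) : (k : ℕ) → AlternatingMap ℝ V ℝ (Fin (p * k))
  | 0 =>
      letI : IsEmpty (Fin (p * 0)) := inferInstanceAs (IsEmpty (Fin 0))
      AlternatingMap.constOfIsEmpty ℝ V (Fin (p * 0)) 1
  | k + 1 => wedge (wedgePow F k) F

/-!
Write `μ = B ℓ`, a nonzero covector by nondegeneracy. Evaluating `μ ∧ F = 0` at `(n, u)` with
`μ n ≠ 0` shows that `F` vanishes on `ker μ`; then every term of the shuffle sum for `A ∧ F`
vanishes as soon as both factors vanish on `ker μ` and at most one argument lies outside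
`ker μ`. Since `ker μ` is a hyperplane, column operations bring any argument tuple of an
alternating form to that shape, so `A ∧ F = 0`. This applies to `A = F` and to
`A = F ∧ ⋯ ∧ F`, which again vanishes on `ker μ`.
-/

open Function

namespace AlternatingMap

variable {R K M N ι : Type*}

theorem map_add_smul_self [Semiring R] [AddCommMonoid M] [Module R M] [AddCommMonoid N]
    [Module R N] [Fintype ι] [DecidableEq ι] (f : M [⋀^ι]→ₗ[R] N) (v : ι → M) (k : ι)
    (c : ι → R) (hc : c k = 0) : f (fun i => v i + c i • v k) = f v := by
  set w : ι → M := fun i => v i + c i • v k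
  suffices ∀ s : Finset ι, f (s.piecewise w v) = f v by
    simpa using this Finset.univ
  intro s
  induction s using Finset.induction_on with
  | empty => simp
  | insert a s ha ih =>
    have hka : s.piecewise w v k = v k := by
      by_cases hk : k ∈ s <;> simp [w, hk, hc]
    have hvanish : c a • f (update (s.piecewise w v) a (v k)) = 0 := by
      rcases eq_or_ne a k with rfl | hak
      · rw [hc, zero_smul]
      · rw [← hka, f.map_update_self _ hak, smul_zero]
    rw [Finset.piecewise_insert, f.map_update_add, f.map_update_smul, hvanish, add_zero,
      update_eq_self_iff.mpr (Finset.piecewise_eq_of_notMem _ _ _ ha).symm, ih]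

theorem eq_zero_of_subsingleton_notMem_ker [Field K] [AddCommGroup M] [Module K M]
    [AddCommGroup N] [Module K N] [Finite ι] (f : M [⋀^ι]→ₗ[K] N) (μ : Module.Dual K M)
    (hf : ∀ v : ι → M, {i | v i ∉ LinearMap.ker μ}.Subsingleton → f v = 0) : f = 0 := by
  classical
  cases nonempty_fintype ι
  ext v
  by_cases hv : ∀ i, μ (v i) = 0
  · exact hf v (by simp [hv])
  obtain ⟨k, hk⟩ := not_forall.mp hv
  -- Gaussian elimination: subtract multiples of `v k` to move every other vector into `ker μ`.
  set c : ι → K := update (fun i => -(μ (v i) / μ (v k))) k 0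
  have hw : {i | v i + c i • v k ∉ LinearMap.ker μ} ⊆ {k} := by
    intro i hi
    by_contra hik
    simp [c, update_of_ne hik, hk] at hi
  rw [← f.map_add_smul_self v k c (by simp [c])]
  exact hf _ (Set.subsingleton_singleton.anti hw)

end AlternatingMap

section Wedge

variable {V : Type*} [AddCommGroup V] [Module ℝ V]

theorem wedge_apply_eq_zero_of_forall_perm {p q : ℕ} (A : AlternatingMap ℝ V ℝ (Fin p))
    (C : AlternatingMap ℝ V ℝ (Fin q)) (v : Fin (p + q) → V)
    (h : ∀ σ : Equiv.Perm (Fin p ⊕ Fin q),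
      A (fun i => v (finSumFinEquiv (σ (.inl i)))) *
        C (fun j => v (finSumFinEquiv (σ (.inr j)))) = 0) :
    wedge A C v = 0 := by
  have key := congrArg (fun X => TensorProduct.lid ℝ ℝ (X (v ∘ finSumFinEquiv)))
    (MultilinearMap.domCoprod_alternization_eq A C)
  simp only [MultilinearMap.alternatization_apply, MultilinearMap.domDomCongr_apply,
    MultilinearMap.domCoprod_apply, AlternatingMap.coe_multilinearMap, map_sum, map_zsmul,
    Units.smul_def, TensorProduct.lid_tmul, smul_eq_mul, comp_apply, h, smul_zero,
    Finset.sum_const_zero, AlternatingMap.smul_apply, map_nsmul, Fintype.card_fin] at key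
  exact (smul_eq_zero.mp key.symm).resolve_left (by positivity)

theorem wedge_apply_eq_zero_of_right {S : Set V} {p q : ℕ} (A : AlternatingMap ℝ V ℝ (Fin p))
    {C : AlternatingMap ℝ V ℝ (Fin q)} (hC : ∀ u, (∀ j, u j ∈ S) → C u = 0)
    {v : Fin (p + q) → V} (hv : ∀ i, v i ∈ S) : wedge A C v = 0 :=
  wedge_apply_eq_zero_of_forall_perm A C v fun _ => by rw [hC _ fun _ => hv _, mul_zero]

theorem wedge_apply_eq_zero_of_subsingleton {S : Set V} {p q : ℕ}
    {A : AlternatingMap ℝ V ℝ (Fin p)} {C : AlternatingMap ℝ V ℝ (Fin q)}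
    (hA : ∀ u, (∀ i, u i ∈ S) → A u = 0) (hC : ∀ u, (∀ j, u j ∈ S) → C u = 0)
    {v : Fin (p + q) → V} (hv : {i | v i ∉ S}.Subsingleton) : wedge A C v = 0 := by
  refine wedge_apply_eq_zero_of_forall_perm A C v fun σ => ?_
  by_cases hl : ∀ i, v (finSumFinEquiv (σ (.inl i))) ∈ S
  · rw [hA _ hl, zero_mul]
  obtain ⟨i, hi⟩ := not_forall.mp hl
  refine mul_eq_zero_of_right _ (hC _ fun j => ?_)
  by_contra hj
  exact Sum.inl_ne_inr (σ.injective (finSumFinEquiv.injective (hv hi hj)))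

theorem WedgeFlatZero.apply_eq_zero_of_forall_mem_ker {B : V →ₗ[ℝ] V →ₗ[ℝ] ℝ} {p : ℕ}
    {F : AlternatingMap ℝ V ℝ (Fin p)} {ℓ : V} (hF : WedgeFlatZero B F ℓ) (hℓ : B ℓ ≠ 0)
    {u : Fin p → V} (hu : ∀ i, u i ∈ LinearMap.ker (B ℓ)) : F u = 0 := by
  obtain ⟨n, hn⟩ : ∃ n, B ℓ n ≠ 0 := by
    by_contra! h
    exact hℓ (LinearMap.ext h)
  simp only [LinearMap.mem_ker] at hu
  -- at `(n, u)` only the first term of `ℓ♭ ∧ F` survives: `B ℓ n * F u = 0`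
  simpa [Fin.sum_univ_succ, hu, hn] using hF (Fin.cons n u)

end Wedge

theorem typeN_wedge_self_eq_zero_general {V : Type*} [AddCommGroup V] [Module ℝ V]
    (B : V →ₗ[ℝ] V →ₗ[ℝ] ℝ)
    (hBnondeg : ∀ x : V, (∀ y : V, B x y = 0) → x = 0)
    {p : ℕ} (F : AlternatingMap ℝ V ℝ (Fin p))
    {ℓ : V} (hℓ : ℓ ≠ 0) (hN : TypeN B F ℓ) :
    wedge F F = 0 ∧ ∀ k : ℕ, 2 ≤ k → wedgePow F k = 0 := by
  have hBℓ : B ℓ ≠ 0 := fun h => hℓ (hBnondeg ℓ fun y => by simp [h])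
  have hF : ∀ u, (∀ i, u i ∈ LinearMap.ker (B ℓ)) → F u = 0 := fun _ =>
    hN.2.apply_eq_zero_of_forall_mem_ker hBℓ
  have wedge_F_eq_zero {q : ℕ} (A : AlternatingMap ℝ V ℝ (Fin q))
      (hA : ∀ u, (∀ i, u i ∈ LinearMap.ker (B ℓ)) → A u = 0) : wedge A F = 0 :=
    (wedge A F).eq_zero_of_subsingleton_notMem_ker (B ℓ) fun _ hv =>
      wedge_apply_eq_zero_of_subsingleton (S := LinearMap.ker (B ℓ)) hA hF hv
  refine ⟨wedge_F_eq_zero F hF, fun k hk => ?_⟩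
  obtain ⟨j, rfl⟩ : ∃ j, k = j + 2 := ⟨k - 2, by omega⟩
  exact wedge_F_eq_zero (wedgePow F (j + 1)) fun _ => wedge_apply_eq_zero_of_right _ hF

/-- for a type N `p`-form `F` (`p ≥ 1`, nondegenerate `B`, `ℓ ≠ 0`) the
`2p`-form `F ∧ F` vanishes; consequently every `k`-fold wedge power with `k ≥ 2`
factors vanishes (so any Chern–Simons term with `k ≥ 2` factors vanishes identically). -/
theorem typeN_wedge_self_eq_zero {V : Type*} [AddCommGroup V] [Module ℝ V]
    [FiniteDimensional ℝ V]
    (B : V →ₗ[ℝ] V →ₗ[ℝ] ℝ) (hBsymm : ∀ x y : V, B x y = B y x)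
    (hBnondeg : ∀ x : V, (∀ y : V, B x y = 0) → x = 0)
    {p : ℕ} (hp : 1 ≤ p) (F : AlternatingMap ℝ V ℝ (Fin p))
    {ℓ : V} (hℓ : ℓ ≠ 0) (hN : TypeN B F ℓ) :
    wedge F F = 0 ∧ ∀ k : ℕ, 2 ≤ k → wedgePow F k = 0 :=
  typeN_wedge_self_eq_zero_general B hBnondeg F hℓ hN
end

section
/- Let B be Lorentzian of signature (1, n−1) on V, let (e₀,…,e_{n−1}) be any pseudo-orthonormal basis, and let F be a p-form on V (1 ≤ p ≤ n−1) of type N with multiple null direction ℓ ≠ 0. Then F² := Σ_{a₁,…,a_p = 0}^{n−1} ε_{a₁}⋯ε_{a_p} F(e_{a₁},…,e_{a_p})² = 0. (The zeroth-order scalar invariant F_{a₁…a_p}F^{a₁…a_p} of a type N p-form vanishes, generalizing the null-field condition (1.1).) -/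
open scoped BigOperators

/-! Contracting `ℓ♭ ∧ F = 0` with a basis vector `e_b` such that `B(ℓ, e_b) ≠ 0` (one exists
since `ℓ ≠ 0`) gives `B(ℓ, e_b) F = ℓ♭ ∧ ι_{e_b} F`. Hence `B(ℓ, e_b) F²` splits into one term per
slot, in which the index of that slot is contracted against `ℓ` while the other factor does not
depend on it; summing over that index first, each term vanishes because `ι_ℓ F = 0`. -/

open Finset Function

theorem epsSign_mul_self {n : ℕ} (a : Fin n) : epsSign a * epsSign a = 1 := by
  unfold epsSign
  split_ifs <;> norm_num

theorem Fintype.sum_mul_eq_zero_of_sum_update_eq_zero {ι κ R : Type*} [Fintype ι] [DecidableEq ι]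
    [Fintype κ] [CommSemiring R] (i : ι) (h g : (ι → κ) → R)
    (hg : ∀ a c, g (update a i c) = g a) (hh : ∀ a, ∑ c, h (update a i c) = 0) :
    ∑ a, h a * g a = 0 := by
  rcases isEmpty_or_nonempty κ with hκ | ⟨⟨c₀⟩⟩
  · have : IsEmpty (ι → κ) := ⟨fun a => hκ.false (a i)⟩
    simp
  have hsplit : ∀ f c, (Equiv.funSplitAt i κ).symm (c, f)
      = update ((Equiv.funSplitAt i κ).symm (c₀, f)) i c := by
    intro f c
    funext j
    by_cases hj : j = i
    · subst hj
      rw [update_self, Equiv.funSplitAt_symm_apply, dif_pos rfl]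
    · rw [update_of_ne hj, Equiv.funSplitAt_symm_apply, Equiv.funSplitAt_symm_apply,
        dif_neg hj, dif_neg hj]
  rw [← (Equiv.funSplitAt i κ).symm.sum_comp, Fintype.sum_prod_type, sum_comm]
  refine Finset.sum_eq_zero fun f _ => ?_
  have hfiber := hsplit f
  generalize (Equiv.funSplitAt i κ).symm (c₀, f) = a₀ at hfiber
  simp_rw [hfiber, hg, ← sum_mul, hh, zero_mul]

namespace IsLorentzBasis

variable {V : Type*} [AddCommGroup V] [Module ℝ V] {n : ℕ} {B : V →ₗ[ℝ] V →ₗ[ℝ] ℝ}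
  {e : Module.Basis (Fin n) ℝ V}

theorem apply_basis (he : IsLorentzBasis B e) (v : V) (c : Fin n) :
    B v (e c) = epsSign c * e.repr v c := by
  have : B.flip (e c) = epsSign c • e.coord c :=
    e.ext fun a => by
      rw [LinearMap.flip_apply, he]
      by_cases hca : c = a
      · subst hca; simp
      · simp [hca, Ne.symm hca]
  exact LinearMap.congr_fun this v

theorem sum_smul_basis (he : IsLorentzBasis B e) (v : V) :
    ∑ c, (epsSign c * B v (e c)) • e c = v := by
  conv_rhs => rw [← e.sum_repr v]
  refine Finset.sum_congr rfl fun c _ => ?_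
  rw [he.apply_basis, ← mul_assoc, epsSign_mul_self, one_mul]

theorem exists_apply_basis_ne_zero (he : IsLorentzBasis B e) {v : V} (hv : v ≠ 0) :
    ∃ c, B v (e c) ≠ 0 := by
  by_contra! h
  rw [← he.sum_smul_basis v] at hv
  simp [h] at hv

end IsLorentzBasis

section TypeN

variable {V : Type*} [AddCommGroup V] [Module ℝ V] {n p : ℕ} {B : V →ₗ[ℝ] V →ₗ[ℝ] ℝ}
  {e : Module.Basis (Fin n) ℝ V} {F : AlternatingMap ℝ V ℝ (Fin p)} {ℓ : V}

theorem IotaZero.sum_epsSign_mul_apply_update (hι : IotaZero F ℓ) (he : IsLorentzBasis B e)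
    (w : Fin p → V) (i : Fin p) :
    ∑ c, epsSign c * B ℓ (e c) * F (update w i (e c)) = 0 := by
  calc ∑ c, epsSign c * B ℓ (e c) * F (update w i (e c))
      = F (update w i (∑ c, (epsSign c * B ℓ (e c)) • e c)) := by
        rw [F.map_update_sum]
        simp [F.map_update_smul, mul_assoc]
    _ = 0 := hι _ ⟨i, by rw [update_self, he.sum_smul_basis]⟩

theorem IotaZero.sum_prod_epsSign_mul_apply_update (hι : IotaZero F ℓ)
    (he : IsLorentzBasis B e) (a : Fin p → Fin n) (i : Fin p) :
    ∑ c, (∏ j, epsSign (update a i c j)) * B ℓ (e c) * F (fun k => e (update a i c k)) = 0 := by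
  have hprod : ∀ c, ∏ j, epsSign (update a i c j) = epsSign c * ∏ j ∈ univ \ {i}, epsSign (a j) :=
    fun c => by simp_rw [apply_update (fun _ => epsSign), prod_update_of_mem (mem_univ i)]
  calc ∑ c, (∏ j, epsSign (update a i c j)) * B ℓ (e c) * F (fun k => e (update a i c k))
      = (∏ j ∈ univ \ {i}, epsSign (a j)) *
          ∑ c, epsSign c * B ℓ (e c) * F (update (fun k => e (a k)) i (e c)) := by
        rw [mul_sum]
        refine sum_congr rfl fun c _ => ?_
        rw [hprod, show (fun k => e (update a i c k)) = update (fun k => e (a k)) i (e c) from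
          comp_update _ _ _ _]
        ring
    _ = 0 := by rw [hι.sum_epsSign_mul_apply_update he, mul_zero]

theorem WedgeFlatZero.mul_apply_eq_sum (hw : WedgeFlatZero B F ℓ)
    (u : V) (v : Fin p → V) :
    B ℓ u * F v = ∑ i : Fin p,
      (-1) ^ (i : ℕ) * B ℓ (v i) * F (Fin.removeNth i.succ (Fin.cons u v : Fin (p + 1) → V)) := by
  have h := hw (Fin.cons u v)
  have h0 : (Fin.cons u v : Fin (p + 1) → V) ∘ Fin.succAbove 0 = v := by
    funext k
    simp
  rw [Fin.sum_univ_succ] at h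
  simp only [Fin.val_zero, pow_zero, one_mul, Fin.cons_zero, Fin.cons_succ, h0, Fin.val_succ,
    pow_succ, mul_neg_one, neg_mul, Finset.sum_neg_distrib] at h
  exact add_neg_eq_zero.mp h

end TypeN

theorem typeN_F_squared_zero_general {V : Type*} [AddCommGroup V] [Module ℝ V] {n : ℕ}
    (B : V →ₗ[ℝ] V →ₗ[ℝ] ℝ)
    (e : Module.Basis (Fin n) ℝ V) (he : IsLorentzBasis B e)
    {p : ℕ}
    (F : AlternatingMap ℝ V ℝ (Fin p))
    {ℓ : V} (hℓ : ℓ ≠ 0) (hN : TypeN B F ℓ) :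
    ∑ a : Fin p → Fin n,
      (∏ i : Fin p, epsSign (a i)) * (F (fun i => e (a i))) ^ 2 = 0 := by
  classical
  obtain ⟨hι, hw⟩ := hN
  obtain ⟨b, hb⟩ := he.exists_apply_basis_ne_zero hℓ
  set G : Fin p → (Fin p → Fin n) → ℝ := fun i a =>
    (-1) ^ (i : ℕ) * F (Fin.removeNth i.succ (Fin.cons (e b) fun k => e (a k) : Fin (p + 1) → V))
  have hG : ∀ i a c, G i (update a i c) = G i a := by
    intro i a c
    simp only [G, show (fun k => e (update a i c k)) = update (fun k => e (a k)) i (e c) from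
      comp_update _ _ _ _, Fin.cons_update, Fin.removeNth_update]
  refine (mul_eq_zero.mp ?_).resolve_left hb
  calc B ℓ (e b) * ∑ a : Fin p → Fin n, (∏ i, epsSign (a i)) * F (fun i => e (a i)) ^ 2
      = ∑ a : Fin p → Fin n, ∑ i,
          (∏ j, epsSign (a j)) * B ℓ (e (a i)) * F (fun k => e (a k)) * G i a := by
        rw [mul_sum]
        refine sum_congr rfl fun a _ => ?_
        rw [sq, show ∀ x y z : ℝ, x * (y * (z * z)) = y * z * (x * z) from fun _ _ _ => by ring,
          hw.mul_apply_eq_sum, mul_sum]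
        refine sum_congr rfl fun i _ => ?_
        simp only [G]
        ring
    _ = ∑ i, ∑ a : Fin p → Fin n,
          (∏ j, epsSign (a j)) * B ℓ (e (a i)) * F (fun k => e (a k)) * G i a := sum_comm
    _ = 0 := sum_eq_zero fun i _ => Fintype.sum_mul_eq_zero_of_sum_update_eq_zero i _ (G i) (hG i)
          fun a => by simpa using hι.sum_prod_epsSign_mul_apply_update he a i

/-- the zeroth-order scalar invariant
`F² = Σ ε_{a₁}⋯ε_{a_p} F(e_{a₁},…,e_{a_p})²` of a type N `p`-form vanishes. -/
theorem typeN_F_squared_zero {V : Type*} [AddCommGroup V] [Module ℝ V]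
    [FiniteDimensional ℝ V] {n : ℕ}
    (B : V →ₗ[ℝ] V →ₗ[ℝ] ℝ)
    (e : Module.Basis (Fin n) ℝ V) (he : IsLorentzBasis B e)
    {p : ℕ} (hp1 : 1 ≤ p) (hpn : p ≤ n - 1)
    (F : AlternatingMap ℝ V ℝ (Fin p))
    {ℓ : V} (hℓ : ℓ ≠ 0) (hN : TypeN B F ℓ) :
    ∑ a : Fin p → Fin n,
      (∏ i : Fin p, epsSign (a i)) * (F (fun i => e (a i))) ^ 2 = 0 :=
  typeN_F_squared_zero_general B e he F hℓ hN
end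

section
/- Let n ≥ 3, label the coordinates of ℝⁿ as (u, r, x²,…,x^{n−1}), and let g be the constant flat (Minkowski, double-null Kundt form) metric with components g_{ur} = g_{ru} = 1, g_{αβ} = δ_{αβ} for α,β ∈ {2,…,n−1}, and all other components zero (its inverse g^{ab} has the same components). Let f_α : ℝⁿ → ℝ (α = 2,…,n−1) be differentiable functions whose values are independent of the coordinate r, and define the antisymmetric 2-form field F : ℝⁿ → (skew n×n matrices) by F_{uα} = f_α = −F_{αu} and all other components zero. Then F satisfies the source-free Maxwell equations — ∂_a F_{bc} + ∂_b F_{ca} + ∂_c F_{ab} = 0 for all indices a,b,c, and Σ_{a,b} g^{ab} ∂_a F_{bc} = 0 for every index c — if and only if, at every point, ∂_α f_β − ∂_β f_α = 0 for all α,β ∈ {2,…,n−1} and Σ_{α=2}^{n−1} ∂_α f_α = 0. (This is the reduction (2.6) of Maxwell's equations for a VSI 2-form, specialized to flat Kundt coordinates: Maxwell's equations hold iff the transverse 1-form f is closed and divergence-free.) -/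
open scoped BigOperators

/-- The partial derivative `∂_a φ` of a real-valued function `φ` on `ℝⁿ` in the `a`-th
standard coordinate direction, evaluated at `x`. -/
noncomputable def pderiv' {n : ℕ} (a : Fin n) (φ : (Fin n → ℝ) → ℝ) (x : Fin n → ℝ) : ℝ :=
  fderiv ℝ φ x (Pi.single a 1)

/-- The components of the constant flat (Minkowski, double-null Kundt form) metric on
`ℝⁿ` with coordinates `(u, r, x², …, x^{n−1})` (indices `0 = u`, `1 = r`):
`g_{ur} = g_{ru} = 1`, `g_{αβ} = δ_{αβ}` for `α, β ≥ 2`, all other components zero.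
Its inverse has the same components. -/
def gFlat (n : ℕ) (a b : Fin n) : ℝ :=
  if ((a : ℕ) = 0 ∧ (b : ℕ) = 1) ∨ ((a : ℕ) = 1 ∧ (b : ℕ) = 0) then 1
  else if a = b ∧ 2 ≤ (a : ℕ) then 1 else 0

/-!
Write `F = du ∧ f`, with `f` extended by zero to the components `u` and `r`. At a fixed point only
the jet `d a b = ∂_a f_b` enters, and it vanishes when `b ∈ {u, r}` and, by `r`-independence, when
`a = r`. The cyclic sum of `∂F` is `δ_a^u (df)_{cb} + δ_b^u (df)_{ac} + δ_c^u (df)_{ba}`, so the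
Bianchi identity says exactly that `df` vanishes on the indices other than `u`, i.e. that `f` is
closed. In the divergence `g^{au} = δ^a_r`, so `∑ g^{ab} ∂_a F_{bc} = ∂_r f_c - δ_c^u ∑_α ∂_α f_α`
and the first term vanishes.
-/

theorem fderiv_apply_eq_zero_of_forall_add_smul_eq {𝕜 E F : Type*} [NontriviallyNormedField 𝕜]
    [NormedAddCommGroup E] [NormedSpace 𝕜 E] [NormedAddCommGroup F] [NormedSpace 𝕜 F]
    {φ : E → F} {x v : E} (h : ∀ t : 𝕜, φ (x + t • v) = φ x) : fderiv 𝕜 φ x v = 0 := by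
  by_cases hφ : DifferentiableAt 𝕜 φ x
  · rw [← hφ.lineDeriv_eq_fderiv, lineDeriv]
    simp only [h, deriv_const]
  · rw [fderiv_zero_of_not_differentiableAt hφ, zero_apply]

theorem pderiv'_eq_zero_of_forall_eq {n : ℕ} {a : Fin n} {φ : (Fin n → ℝ) → ℝ}
    (h : ∀ x y : Fin n → ℝ, (∀ b, b ≠ a → x b = y b) → φ x = φ y) (x : Fin n → ℝ) :
    pderiv' a φ x = 0 :=
  fderiv_apply_eq_zero_of_forall_add_smul_eq fun t =>
    h _ _ fun b hb => by simp [Pi.single_eq_of_ne hb]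

theorem pderiv'_neg {n : ℕ} (a : Fin n) (φ : (Fin n → ℝ) → ℝ) (x : Fin n → ℝ) :
    pderiv' a (fun y => -φ y) x = -pderiv' a φ x := by
  simp only [pderiv', fderiv_fun_neg, neg_apply]

theorem pderiv'_const {n : ℕ} (a : Fin n) (c : ℝ) (x : Fin n → ℝ) :
    pderiv' a (fun _ => c) x = 0 := by
  simp [pderiv']

section DuWedge

variable {n : ℕ} (d : Fin n → Fin n → ℝ)

/-- With `d a b = ∂_a f_b` and index `0` the coordinate `u`, this is `∂_a (du ∧ f)_{bc}`. -/
def duWedgeDeriv (a b c : Fin n) : ℝ :=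
  (if (b : ℕ) = 0 then d a c else 0) - (if (c : ℕ) = 0 then d a b else 0)

theorem duWedgeDeriv_cyclic (a b c : Fin n) :
    duWedgeDeriv d a b c + duWedgeDeriv d b c a + duWedgeDeriv d c a b =
      (if (a : ℕ) = 0 then d c b - d b c else 0) + (if (b : ℕ) = 0 then d a c - d c a else 0)
        + (if (c : ℕ) = 0 then d b a - d a b else 0) := by
  unfold duWedgeDeriv
  split_ifs <;> ring

variable {d}

theorem duWedgeDeriv_cyclic_eq_zero_iff (hd0 : ∀ a b : Fin n, (b : ℕ) < 2 → d a b = 0)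
    (hr : ∀ a b : Fin n, (a : ℕ) = 1 → d a b = 0) :
    (∀ a b c : Fin n, duWedgeDeriv d a b c + duWedgeDeriv d b c a + duWedgeDeriv d c a b = 0) ↔
      ∀ α β : Fin n, 2 ≤ (α : ℕ) → 2 ≤ (β : ℕ) → d α β - d β α = 0 := by
  simp only [duWedgeDeriv_cyclic]
  constructor
  · intro h α β hα hβ
    simpa [show (α : ℕ) ≠ 0 by omega, show (β : ℕ) ≠ 0 by omega] using h ⟨0, by omega⟩ β α
  · intro h a b c
    have hcurl (a b : Fin n) (ha : (a : ℕ) ≠ 0) (hb : (b : ℕ) ≠ 0) : d a b - d b a = 0 := by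
      by_cases ha2 : 2 ≤ (a : ℕ) <;> by_cases hb2 : 2 ≤ (b : ℕ) <;> grind
    split_ifs <;> grind

theorem gFlat_mul_duWedgeDeriv (hd0 : ∀ a b : Fin n, (b : ℕ) < 2 → d a b = 0)
    (hr : ∀ a b : Fin n, (a : ℕ) = 1 → d a b = 0) (a b c : Fin n) :
    gFlat n a b * duWedgeDeriv d a b c =
      if a = b then (if (c : ℕ) = 0 ∧ 2 ≤ (a : ℕ) then -d a a else 0) else 0 := by
  unfold gFlat duWedgeDeriv
  split_ifs <;> grind

theorem sum_gFlat_mul_duWedgeDeriv (hd0 : ∀ a b : Fin n, (b : ℕ) < 2 → d a b = 0)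
    (hr : ∀ a b : Fin n, (a : ℕ) = 1 → d a b = 0) (c : Fin n) :
    ∑ a, ∑ b, gFlat n a b * duWedgeDeriv d a b c =
      if (c : ℕ) = 0 then -∑ α ∈ Finset.univ.filter (fun α : Fin n => 2 ≤ (α : ℕ)), d α α
      else 0 := by
  simp only [gFlat_mul_duWedgeDeriv hd0 hr, Finset.sum_ite_eq, Finset.mem_univ, if_true]
  split_ifs with hc
  · simp [hc, Finset.sum_filter, ← Finset.sum_neg_distrib, neg_ite]
  · simp [hc]

theorem sum_gFlat_mul_duWedgeDeriv_eq_zero_iff (hd0 : ∀ a b : Fin n, (b : ℕ) < 2 → d a b = 0)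
    (hr : ∀ a b : Fin n, (a : ℕ) = 1 → d a b = 0) :
    (∀ c : Fin n, ∑ a, ∑ b, gFlat n a b * duWedgeDeriv d a b c = 0) ↔
      ∑ α ∈ Finset.univ.filter (fun α : Fin n => 2 ≤ (α : ℕ)), d α α = 0 := by
  simp only [sum_gFlat_mul_duWedgeDeriv hd0 hr]
  refine ⟨fun h => ?_, fun h c => by simp [h]⟩
  rcases n with _ | n
  · simp
  · simpa using h 0

end DuWedge

noncomputable def transverseJet {n : ℕ} (f : Fin n → (Fin n → ℝ) → ℝ) (x : Fin n → ℝ)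
    (a b : Fin n) : ℝ :=
  if 2 ≤ (b : ℕ) then pderiv' a (f b) x else 0

theorem pderiv'_eq_duWedgeDeriv_transverseJet {n : ℕ} {f : Fin n → (Fin n → ℝ) → ℝ}
    {F : (Fin n → ℝ) → Fin n → Fin n → ℝ}
    (hF : ∀ (x : Fin n → ℝ) (a b : Fin n), F x a b =
        if (a : ℕ) = 0 ∧ 2 ≤ (b : ℕ) then f b x
        else if (b : ℕ) = 0 ∧ 2 ≤ (a : ℕ) then -(f a x)
        else 0)
    (x : Fin n → ℝ) (a b c : Fin n) :
    pderiv' a (fun y => F y b c) x = duWedgeDeriv (transverseJet f x) a b c := by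
  simp only [hF, duWedgeDeriv, transverseJet]
  by_cases h₁ : (b : ℕ) = 0 ∧ 2 ≤ (c : ℕ)
  · simp only [if_pos h₁]
    grind
  by_cases h₂ : (c : ℕ) = 0 ∧ 2 ≤ (b : ℕ)
  · simp only [if_neg h₁, if_pos h₂, pderiv'_neg]
    grind
  · simp only [if_neg h₁, if_neg h₂, pderiv'_const]
    grind

theorem transverseJet_of_lt_two {n : ℕ} (f : Fin n → (Fin n → ℝ) → ℝ) (x : Fin n → ℝ)
    (a : Fin n) {b : Fin n} (hb : (b : ℕ) < 2) : transverseJet f x a b = 0 :=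
  if_neg (by omega)

theorem transverseJet_of_eq_one {n : ℕ} {f : Fin n → (Fin n → ℝ) → ℝ}
    (hrindep : ∀ α : Fin n, 2 ≤ (α : ℕ) → ∀ x y : Fin n → ℝ,
        (∀ b : Fin n, (b : ℕ) ≠ 1 → x b = y b) → f α x = f α y)
    (x : Fin n → ℝ) {a : Fin n} (ha : (a : ℕ) = 1) (b : Fin n) : transverseJet f x a b = 0 := by
  unfold transverseJet
  split_ifs with hb
  · exact pderiv'_eq_zero_of_forall_eq
      (fun y z hyz => hrindep b hb y z fun k hk => hyz k fun e => hk (e ▸ ha)) x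
  · rfl

theorem vsi_two_form_maxwell_reduction_general {n : ℕ}
    (f : Fin n → (Fin n → ℝ) → ℝ)
    (hrindep : ∀ α : Fin n, 2 ≤ (α : ℕ) → ∀ x y : Fin n → ℝ,
        (∀ b : Fin n, (b : ℕ) ≠ 1 → x b = y b) → f α x = f α y)
    (F : (Fin n → ℝ) → Fin n → Fin n → ℝ)
    (hFdef : ∀ (x : Fin n → ℝ) (a b : Fin n), F x a b =
        if (a : ℕ) = 0 ∧ 2 ≤ (b : ℕ) then f b x
        else if (b : ℕ) = 0 ∧ 2 ≤ (a : ℕ) then -(f a x)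
        else 0) :
    ((∀ (x : Fin n → ℝ) (a b c : Fin n),
        pderiv' a (fun y => F y b c) x + pderiv' b (fun y => F y c a) x
          + pderiv' c (fun y => F y a b) x = 0) ∧
      (∀ (x : Fin n → ℝ) (c : Fin n),
        ∑ a : Fin n, ∑ b : Fin n, gFlat n a b * pderiv' a (fun y => F y b c) x = 0))
    ↔
    (∀ x : Fin n → ℝ,
      (∀ α β : Fin n, 2 ≤ (α : ℕ) → 2 ≤ (β : ℕ) →
        pderiv' α (f β) x - pderiv' β (f α) x = 0) ∧
      ∑ α ∈ Finset.univ.filter (fun α : Fin n => 2 ≤ (α : ℕ)), pderiv' α (f α) x = 0) := by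
  have hd0 (x : Fin n → ℝ) (a b : Fin n) (hb : (b : ℕ) < 2) := transverseJet_of_lt_two f x a hb
  have hr (x : Fin n → ℝ) (a b : Fin n) (ha : (a : ℕ) = 1) := transverseJet_of_eq_one hrindep x ha b
  simp only [pderiv'_eq_duWedgeDeriv_transverseJet hFdef]
  rw [← forall_and]
  refine forall_congr' fun x => and_congr ?_ ?_
  · rw [duWedgeDeriv_cyclic_eq_zero_iff (hd0 x) (hr x)]
    exact forall₄_congr fun α β hα hβ => by simp only [transverseJet, if_pos hα, if_pos hβ]
  · rw [sum_gFlat_mul_duWedgeDeriv_eq_zero_iff (hd0 x) (hr x)]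
    exact Eq.congr_left (Finset.sum_congr rfl fun α hα => if_pos (Finset.mem_filter.1 hα).2)

/-- for the VSI 2-form field `F` with `F_{uα} = f_α = −F_{αu}` (all other
components zero), with the `f_α` differentiable and independent of the coordinate `r`
(index `1`), the source-free Maxwell equations
`∂_a F_{bc} + ∂_b F_{ca} + ∂_c F_{ab} = 0` and `Σ g^{ab} ∂_a F_{bc} = 0`
hold if and only if, at every point, `∂_α f_β − ∂_β f_α = 0` for all `α, β ≥ 2` and
`Σ_{α≥2} ∂_α f_α = 0` (the transverse 1-form `f` is closed and divergence-free). -/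
theorem vsi_two_form_maxwell_reduction {n : ℕ} (hn : 3 ≤ n)
    (f : Fin n → (Fin n → ℝ) → ℝ)
    (hdiff : ∀ α : Fin n, 2 ≤ (α : ℕ) → Differentiable ℝ (f α))
    (hrindep : ∀ α : Fin n, 2 ≤ (α : ℕ) → ∀ x y : Fin n → ℝ,
        (∀ b : Fin n, (b : ℕ) ≠ 1 → x b = y b) → f α x = f α y)
    (F : (Fin n → ℝ) → Fin n → Fin n → ℝ)
    (hFdef : ∀ (x : Fin n → ℝ) (a b : Fin n), F x a b =
        if (a : ℕ) = 0 ∧ 2 ≤ (b : ℕ) then f b x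
        else if (b : ℕ) = 0 ∧ 2 ≤ (a : ℕ) then -(f a x)
        else 0) :
    ((∀ (x : Fin n → ℝ) (a b c : Fin n),
        pderiv' a (fun y => F y b c) x + pderiv' b (fun y => F y c a) x
          + pderiv' c (fun y => F y a b) x = 0) ∧
      (∀ (x : Fin n → ℝ) (c : Fin n),
        ∑ a : Fin n, ∑ b : Fin n, gFlat n a b * pderiv' a (fun y => F y b c) x = 0))
    ↔
    (∀ x : Fin n → ℝ,
      (∀ α β : Fin n, 2 ≤ (α : ℕ) → 2 ≤ (β : ℕ) →
        pderiv' α (f β) x - pderiv' β (f α) x = 0) ∧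
      ∑ α ∈ Finset.univ.filter (fun α : Fin n => 2 ≤ (α : ℕ)), pderiv' α (f α) x = 0) :=
  vsi_two_form_maxwell_reduction_general f hrindep F hFdef
end
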